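/- arXiv:1309.0295 — 6 statements merged into one kernel-verified Lean document; each statement's English description precedes it below -/
import Mathlib

section
/- Let F(T), G(T) ∈ ℤ[T] be monic polynomials that are coprime in ℚ[T]. Then the quotient ring ℤ[T]/(F(T), G(T)) is a finite ring whose cardinality equals the absolute value of the resultant Res(F, G). -/
open Polynomial

/-- The resultant of two monic integer polynomials `F`, `G`, defined as the norm of the
image of `G` in `ℤ[T]/(F)` (which is a free `ℤ`-module since `F` is monic). -/
noncomputable def intResultant (F G : Polynomial ℤ) : ℤ :=
  Algebra.norm ℤ (AdjoinRoot.mk F G)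

/-!
Since `F` is monic, `ℤ[T]/(F)` is a free `ℤ`-module of finite rank, and `ℤ[T]/(F, G)` is its
quotient by the image of multiplication by `g = G mod F`. Coprimality over `ℚ` makes `g` a
non-zero-divisor, so this multiplication map is injective, and the Smith normal form gives
`|det| = [ℤ[T]/(F) : g ℤ[T]/(F)]`; that determinant is the norm of `g`, i.e. the resultant.
-/

namespace Ideal

noncomputable def quotientSpanPairEquiv {R : Type*} [CommRing R] (a b : R) :
    R ⧸ span ({a, b} : Set R) ≃+* (R ⧸ span {a}) ⧸ span {Quotient.mk (span {a}) b} :=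
  (quotEquivOfEq (span_insert a {b})).trans <|
    (DoubleQuot.quotQuotEquivQuotSup (span {a}) (span {b})).symm.trans <|
      quotEquivOfEq (by rw [map_span, Set.image_singleton])

end Ideal

theorem LinearMap.natCard_quotient_range_eq_natAbs_det {M : Type*} [AddCommGroup M]
    [Module.Free ℤ M] [Module.Finite ℤ M] {φ : M →ₗ[ℤ] M} (hφ : Function.Injective φ) :
    Nat.card (M ⧸ LinearMap.range φ) = (LinearMap.det φ).natAbs :=
  (Submodule.natAbs_det_equiv (LinearMap.range φ) (LinearEquiv.ofInjective φ hφ)).symm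

theorem Ideal.natCard_quotient_span_singleton {S : Type*} [CommRing S] [Module.Free ℤ S]
    [Module.Finite ℤ S] {r : S} (hr : IsLeftRegular r) :
    Nat.card (S ⧸ Ideal.span {r}) = (Algebra.norm ℤ r).natAbs := by
  have hrange : LinearMap.range (Algebra.lmul ℤ S r) = (Ideal.span {r}).restrictScalars ℤ := by
    ext x
    simp [Ideal.mem_span_singleton', mul_comm]
  rw [Algebra.norm_apply, ← LinearMap.natCard_quotient_range_eq_natAbs_det hr, hrange]
  exact Nat.card_congr (Submodule.Quotient.restrictScalarsEquiv ℤ (Ideal.span {r})).toEquiv.symm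

theorem Algebra.norm_ne_zero_of_isLeftRegular {R S : Type*} [CommRing R] [IsDomain R] [CommRing S]
    [Algebra R S] [Module.Free R S] [Module.Finite R S] {r : S} (hr : IsLeftRegular r) :
    Algebra.norm R r ≠ 0 := by
  rw [Algebra.norm_apply, Ne, LinearMap.det_eq_zero_iff_ker_ne_bot, not_not]
  exact LinearMap.ker_eq_bot.mpr hr

/-- Divisibility by a monic polynomial can be checked after an injective change of coefficients. -/
theorem AdjoinRoot.isLeftRegular_mk_of_isCoprime_map {R S : Type*} [CommRing R] [CommRing S]
    {f : R →+* S} (hf : Function.Injective f) {F G : R[X]} (hF : F.Monic)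
    (hcop : IsCoprime (F.map f) (G.map f)) : IsLeftRegular (AdjoinRoot.mk F G) := by
  refine isLeftRegular_iff_right_eq_zero_of_mul.mpr fun x hx => ?_
  obtain ⟨P, rfl⟩ := AdjoinRoot.mk_surjective x
  rw [← map_mul, AdjoinRoot.mk_eq_zero] at hx
  rw [AdjoinRoot.mk_eq_zero, ← Polynomial.map_dvd_map f hf hF]
  exact hcop.dvd_of_dvd_mul_left (by simpa only [Polynomial.map_mul] using Polynomial.map_dvd f hx)

theorem finite_quotient_card_eq_natAbs_resultant_general (F G : Polynomial ℤ)
    (hF : F.Monic)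
    (hcop : IsCoprime (F.map (Int.castRingHom ℚ)) (G.map (Int.castRingHom ℚ))) :
    Finite (Polynomial ℤ ⧸ Ideal.span ({F, G} : Set (Polynomial ℤ))) ∧
      Nat.card (Polynomial ℤ ⧸ Ideal.span ({F, G} : Set (Polynomial ℤ))) =
        (intResultant F G).natAbs := by
  have : Module.Free ℤ (AdjoinRoot F) := .of_basis (AdjoinRoot.powerBasis' hF).basis
  have : Module.Finite ℤ (AdjoinRoot F) := .of_basis (AdjoinRoot.powerBasis' hF).basis
  have hreg : IsLeftRegular (AdjoinRoot.mk F G) :=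
    AdjoinRoot.isLeftRegular_mk_of_isCoprime_map Int.cast_injective hF hcop
  have hcard : Nat.card (Polynomial ℤ ⧸ Ideal.span ({F, G} : Set (Polynomial ℤ))) =
      (intResultant F G).natAbs :=
    (Nat.card_congr (Ideal.quotientSpanPairEquiv F G).toEquiv).trans
      (Ideal.natCard_quotient_span_singleton (S := AdjoinRoot F) hreg)
  refine ⟨Nat.finite_of_card_ne_zero ?_, hcard⟩
  rw [hcard, Int.natAbs_ne_zero]
  exact Algebra.norm_ne_zero_of_isLeftRegular hreg

/-- Let `F, G ∈ ℤ[T]` be monic polynomials that are coprime in `ℚ[T]`.  Then the quotient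
ring `ℤ[T]/(F, G)` is a finite ring whose cardinality equals `|Res(F, G)|`. -/
theorem finite_quotient_card_eq_natAbs_resultant (F G : Polynomial ℤ)
    (hF : F.Monic) (hG : G.Monic)
    (hcop : IsCoprime (F.map (Int.castRingHom ℚ)) (G.map (Int.castRingHom ℚ))) :
    Finite (Polynomial ℤ ⧸ Ideal.span ({F, G} : Set (Polynomial ℤ))) ∧
      Nat.card (Polynomial ℤ ⧸ Ideal.span ({F, G} : Set (Polynomial ℤ))) =
        (intResultant F G).natAbs :=
  finite_quotient_card_eq_natAbs_resultant_general F G hF hcop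
end

section
/- Let F(T), G(T) ∈ ℤ[T] be monic polynomials coprime over ℚ, and let d be a generator of the ideal (F(T), G(T)) ∩ ℤ of ℤ (taken positive). Then d divides Res(F, G), and a prime p divides d if and only if p divides Res(F, G). -/
/-! In `A = ℤ[T]/(F)` the resultant is the norm of `g = G mod F`, and for an integer `n`,
`n ∈ (F, G)` exactly when `g ∣ n` in `A`. Cayley–Hamilton for multiplication by `g` gives
`g ∣ N(g)`, so `d ∣ Res(F, G)`; conversely `g ∣ d` gives `N(g) ∣ N(d) = d ^ deg F`, so every
prime factor of `Res(F, G)` divides `d`. -/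

open Polynomial

namespace Algebra

variable {R S : Type*} [CommRing R] [CommRing S] [Algebra R S] [Module.Free R S]

theorem dvd_algebraMap_norm_self [Module.Finite R S] (x : S) :
    x ∣ algebraMap R S (norm R x) := by
  set p := (lmul R S x).charpoly
  have hp : aeval x p = 0 := by
    have h := LinearMap.congr_fun (LinearMap.aeval_self_charpoly (lmul R S x)) 1
    rwa [aeval_algHom_apply, coe_lmul_eq_mul, LinearMap.mul_apply', mul_one] at h
  have hcoeff : x ∣ algebraMap R S (p.coeff 0) := by
    obtain ⟨q, hq⟩ := X_dvd_sub_C (p := p)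
    refine ⟨-aeval x q, ?_⟩
    have h := congrArg (aeval x) hq
    simp only [map_sub, hp, aeval_C, map_mul, aeval_X] at h
    linear_combination -h
  rw [norm_apply, LinearMap.det_eq_sign_charpoly_coeff, map_mul]
  exact hcoeff.mul_left _

theorem norm_dvd_pow_finrank_of_dvd_algebraMap {x : S} {c : R} (h : x ∣ algebraMap R S c) :
    norm R x ∣ c ^ Module.finrank R S := by
  obtain ⟨y, hy⟩ := h
  exact ⟨norm R y, by rw [← Algebra.norm_algebraMap, hy, map_mul]⟩

end Algebra

theorem AdjoinRoot.mk_dvd_algebraMap_iff {R : Type*} [CommRing R] {F G : R[X]} {c : R} :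
    mk F G ∣ algebraMap R (AdjoinRoot F) c ↔ C c ∈ Ideal.span {F, G} := by
  rw [Ideal.mem_span_pair, algebraMap_eq, ← mk_C]
  constructor
  · rintro ⟨y, hy⟩
    obtain ⟨B, rfl⟩ := mk_surjective y
    obtain ⟨A, hA⟩ := mk_eq_mk.mp (hy.trans (map_mul _ _ _).symm)
    exact ⟨A, B, by linear_combination -hA⟩
  · rintro ⟨A, B, hAB⟩
    exact ⟨mk F B, by rw [← hAB, map_add, map_mul, map_mul, mk_self]; ring⟩

theorem generator_dvd_resultant_and_same_primes_general (F G : Polynomial ℤ) (hF : F.Monic)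
    (d : ℤ)
    (hgen : ∀ n : ℤ, C n ∈ Ideal.span ({F, G} : Set (Polynomial ℤ)) ↔ d ∣ n) :
    d ∣ intResultant F G ∧
      ∀ p : ℤ, Prime p → (p ∣ d ↔ p ∣ intResultant F G) := by
  have := hF.free_adjoinRoot
  have := hF.finite_adjoinRoot
  have hdvd : d ∣ intResultant F G :=
    (hgen _).mp (AdjoinRoot.mk_dvd_algebraMap_iff.mp (Algebra.dvd_algebraMap_norm_self _))
  have hpow : intResultant F G ∣ d ^ Module.finrank ℤ (AdjoinRoot F) :=
    Algebra.norm_dvd_pow_finrank_of_dvd_algebraMap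
      (AdjoinRoot.mk_dvd_algebraMap_iff.mpr ((hgen d).mpr dvd_rfl))
  exact ⟨hdvd, fun p hp => ⟨fun h => h.trans hdvd, fun h => hp.dvd_of_dvd_pow (h.trans hpow)⟩⟩

/-- Let `F, G ∈ ℤ[T]` be monic, coprime over `ℚ`, and let `d > 0` be a generator of the
ideal `(F, G) ∩ ℤ` of `ℤ`.  Then `d ∣ Res(F, G)`, and a prime `p` divides `d` if and only
if `p` divides `Res(F, G)`. -/
theorem generator_dvd_resultant_and_same_primes (F G : Polynomial ℤ) (hF : F.Monic)
    (hG : G.Monic)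
    (hcop : IsCoprime (F.map (Int.castRingHom ℚ)) (G.map (Int.castRingHom ℚ)))
    (d : ℤ) (hd : 0 < d)
    (hgen : ∀ n : ℤ, C n ∈ Ideal.span ({F, G} : Set (Polynomial ℤ)) ↔ d ∣ n) :
    d ∣ intResultant F G ∧
      ∀ p : ℤ, Prime p → (p ∣ d ↔ p ∣ intResultant F G) :=
  generator_dvd_resultant_and_same_primes_general F G hF d hgen
end

section
/- For any integer N > 1, the ring ℤ[1/N][T]/(P_N(T)) is isomorphic to the product over divisors D of N with D > 1 of the rings ℤ[1/N][T]/(Φ_D(T)). -/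
open Polynomial

/-- For `N > 1` and `R = ℤ[1/N]` (any localization of `ℤ` away from `N`), the ring
`ℤ[1/N][T]/(P_N(T))` is isomorphic to the product over the divisors `D` of `N` with
`D > 1` of the rings `ℤ[1/N][T]/(Φ_D(T))`. -/
theorem quotient_PN_iso_prod_cyclotomic (N : ℕ) (hN : 1 < N)
    (R : Type*) [CommRing R] [IsLocalization.Away (N : ℤ) R] :
    Nonempty
      ((Polynomial R ⧸ Ideal.span {∑ i ∈ Finset.range N, (X : Polynomial R) ^ i}) ≃+*
        ((D : {D : ℕ // D ∣ N ∧ 1 < D}) →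
          Polynomial R ⧸ Ideal.span {cyclotomic (D : ℕ) R})) := by
  have hN0 : 0 < N := by omega
  -- the index type is a fintype
  have hmem : ∀ x : ℕ, x ∈ N.divisors.erase 1 ↔ x ∣ N ∧ 1 < x := by
    intro x
    simp only [Finset.mem_erase, Nat.mem_divisors]
    constructor
    · rintro ⟨h1, h2, h3⟩
      have : x ≠ 0 := fun h => by subst h; exact h3 (zero_dvd_iff.mp h2)
      exact ⟨h2, by omega⟩
    · rintro ⟨h1, h2⟩
      exact ⟨by omega, h1, by omega⟩
  haveI : Fintype {D : ℕ // D ∣ N ∧ 1 < D} := Fintype.subtype (N.divisors.erase 1) hmem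
  -- (N : R) is a unit
  have hNu : IsUnit ((N : ℕ) : R) := by
    have := IsLocalization.Away.algebraMap_isUnit (S := R) (N : ℤ)
    simpa using this
  -- X^N - 1 is separable
  have hsep : Separable ((X : Polynomial R) ^ N - 1) := by
    have := separable_X_pow_sub_C_unit (R := R) (n := N) 1 hNu
    simpa using this
  -- product formula
  have hprod : ∏ D : {D : ℕ // D ∣ N ∧ 1 < D}, cyclotomic (D : ℕ) R
      = ∑ i ∈ Finset.range N, (X : Polynomial R) ^ i := by
    rw [← Finset.prod_subtype (N.divisors.erase 1) hmem (fun i => cyclotomic i R)]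
    exact prod_cyclotomic_eq_geom_sum hN0 R
  -- geom sum divides X^N - 1
  have hgdvd : (∑ i ∈ Finset.range N, (X : Polynomial R) ^ i) ∣ (X : Polynomial R) ^ N - 1 := by
    exact ⟨X - 1, (geom_sum_mul (X : Polynomial R) N).symm⟩
  -- pairwise coprimality
  have hcop : ∀ (i j : {D : ℕ // D ∣ N ∧ 1 < D}), i ≠ j →
      IsCoprime (cyclotomic (i : ℕ) R) (cyclotomic (j : ℕ) R) := by
    intro i j hij
    have hdvd : cyclotomic (i : ℕ) R * cyclotomic (j : ℕ) R ∣
        ∏ D : {D : ℕ // D ∣ N ∧ 1 < D}, cyclotomic (D : ℕ) R := by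
      rw [← Finset.mul_prod_erase Finset.univ _ (Finset.mem_univ i)]
      exact mul_dvd_mul dvd_rfl
        (Finset.dvd_prod_of_mem _ (Finset.mem_erase.mpr ⟨hij.symm, Finset.mem_univ j⟩))
    have : (cyclotomic (i : ℕ) R * cyclotomic (j : ℕ) R).Separable :=
      hsep.of_dvd (hdvd.trans (hprod ▸ hgdvd))
    exact this.isCoprime
  -- span of geom sum = infimum of spans of cyclotomics
  have hspan : Ideal.span {∑ i ∈ Finset.range N, (X : Polynomial R) ^ i}
      = ⨅ D : {D : ℕ // D ∣ N ∧ 1 < D}, Ideal.span {cyclotomic (D : ℕ) R} := by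
    rw [Ideal.iInf_span_singleton hcop, hprod]
  exact ⟨(Ideal.quotEquivOfEq hspan).trans
    (Ideal.quotientInfRingEquivPiQuotient _ (fun i j hij =>
      (Ideal.isCoprime_span_singleton_iff _ _).mpr (hcop i j hij)))⟩
end

section
/- Let N > 1 be an integer. For each positive divisor D of N, set Q_{N,D}(T) = (T^N − 1)/(T^D − 1) ∈ ℤ[T]. Then the ideal of ℤ[T] generated by the polynomials Q_{N, N/p}(T), as p ranges over the prime divisors of N, equals the principal ideal generated by the cyclotomic polynomial Φ_N(T). -/
/-!
Since `Q_{N,N/p} = ∏_{d ∣ N, d ∤ N/p} Φ_d`, each generator is `Φ_N` times a cofactor `S_p`, and it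
suffices that the `S_p` generate the unit ideal of `ℤ[T]`. Otherwise they all vanish under some
ring map `ℤ[T] → K` onto a field, sending `T` to `ζ`; then each `S_p` has a factor `Φ_{d_p}` with
`Φ_{d_p}(ζ) = 0`, where `d_p ∣ N`, `d_p ≠ N`, `d_p ∤ N/p`. If `K` has exponential characteristic
`q`, every `d_p` is `q^{a_p}` times the order of `ζ`, so the `d_p` with largest `a_p` is divisible by
all the others, hence by the full `p`-part of `N` for every `p`, hence equals `N`.
-/

open Polynomial

/-- `Q_{N,D}(T) = (T^N − 1)/(T^D − 1) = Σ_{i<N/D} T^{iD}` for `D ∣ N`. -/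
noncomputable def QND (N D : ℕ) : Polynomial ℤ :=
  ∑ i ∈ Finset.range (N / D), (X : Polynomial ℤ) ^ (i * D)

open scoped Pointwise

noncomputable def QNDCofactor (N D : ℕ) : ℤ[X] :=
  ∏ d ∈ (N.divisors \ D.divisors).erase N, cyclotomic d ℤ

theorem QND_mul_X_pow_sub_one {N D : ℕ} (hDN : D ∣ N) : QND N D * (X ^ D - 1) = X ^ N - 1 := by
  simp_rw [QND, mul_comm _ D, pow_mul]
  rw [geom_sum_mul, ← pow_mul, Nat.mul_div_cancel' hDN]

theorem QND_eq_prod_cyclotomic {N D : ℕ} (hN : N ≠ 0) (hDN : D ∣ N) :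
    QND N D = ∏ d ∈ N.divisors \ D.divisors, cyclotomic d ℤ := by
  have hD : 0 < D := Nat.pos_of_dvd_of_pos hDN (Nat.pos_of_ne_zero hN)
  apply mul_right_cancel₀ (by simpa using X_pow_sub_C_ne_zero hD (1 : ℤ))
  rw [QND_mul_X_pow_sub_one hDN, mul_comm,
    X_pow_sub_one_mul_prod_cyclotomic_eq_X_pow_sub_one_of_dvd ℤ hDN hN]

theorem QND_eq_cyclotomic_mul_QNDCofactor {N D : ℕ} (hDN : D ∣ N) (hD : D < N) :
    QND N D = cyclotomic N ℤ * QNDCofactor N D := by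
  have hN : N ≠ 0 := by omega
  have hmem : N ∈ N.divisors \ D.divisors :=
    Finset.mem_sdiff.2 ⟨Nat.mem_divisors_self N hN, fun h => (Nat.divisor_le h).not_gt hD⟩
  rw [QND_eq_prod_cyclotomic hN hDN, QNDCofactor, ← Finset.mul_prod_erase _ _ hmem]

theorem Nat.factorization_eq_of_dvd_of_not_dvd_div {d N p : ℕ} (hp : p.Prime) (hdN : d ∣ N)
    (hd : ¬ d ∣ N / p) : d.factorization p = N.factorization p := by
  obtain ⟨k, rfl⟩ := hdN
  have hpk : ¬ p ∣ k := by
    rintro ⟨j, rfl⟩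
    exact hd ⟨j, by rw [mul_left_comm, Nat.mul_div_cancel_left _ hp.pos]⟩
  have hd0 : d ≠ 0 := by rintro rfl; simp at hd
  have hk0 : k ≠ 0 := by rintro rfl; simp at hpk
  rw [Nat.factorization_mul hd0 hk0, Finsupp.add_apply,
    Nat.factorization_eq_zero_of_not_dvd hpk, add_zero]

theorem Nat.exists_eq_of_ordCompl_eq {N q e : ℕ} {d : ℕ → ℕ} (hN : N.primeFactors.Nonempty)
    (hdN : ∀ p ∈ N.primeFactors, d p ∣ N) (hd : ∀ p ∈ N.primeFactors, ¬ d p ∣ N / p)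
    (he : ∀ p ∈ N.primeFactors, ordCompl[q] (d p) = e) : ∃ p ∈ N.primeFactors, d p = N := by
  obtain ⟨p₀, hp₀, hmax⟩ := N.primeFactors.exists_max_image (fun p => (d p).factorization q) hN
  have hN0 : N ≠ 0 := (Nat.mem_primeFactors.1 hp₀).2.2
  have hd0 : ∀ p ∈ N.primeFactors, d p ≠ 0 := fun p hp => ne_zero_of_dvd_ne_zero hN0 (hdN p hp)
  have hd_dvd : ∀ p ∈ N.primeFactors, d p ∣ d p₀ := by
    intro p hp
    rw [← Nat.ordProj_mul_ordCompl_eq_self (d p) q, ← Nat.ordProj_mul_ordCompl_eq_self (d p₀) q,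
      he p hp, he p₀ hp₀]
    exact mul_dvd_mul_right (pow_dvd_pow q (hmax p hp)) e
  refine ⟨p₀, hp₀, Nat.dvd_antisymm (hdN p₀ hp₀) ?_⟩
  rw [← Nat.factorization_prime_le_iff_dvd hN0 (hd0 p₀ hp₀)]
  intro p hp
  by_cases hpN : p ∣ N
  · have hpN' : p ∈ N.primeFactors := Nat.mem_primeFactors.2 ⟨hp, hpN, hN0⟩
    rw [← Nat.factorization_eq_of_dvd_of_not_dvd_div hp (hdN p hpN') (hd p hpN')]
    exact (Nat.factorization_le_iff_dvd (hd0 p hpN') (hd0 p₀ hp₀)).2 (hd_dvd p hpN') p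
  · simp [Nat.factorization_eq_zero_of_not_dvd hpN]

theorem isPrimitiveRoot_ordCompl_of_isRoot_cyclotomic {R : Type*} [CommRing R] [IsDomain R]
    (q : ℕ) [hR : ExpChar R q] {n : ℕ} {ζ : R} (hn : n ≠ 0) (h : (cyclotomic n R).IsRoot ζ) :
    IsPrimitiveRoot ζ (ordCompl[q] n) := by
  cases hR with
  | zero => simpa using (isRoot_cyclotomic_iff_charZero (Nat.pos_of_ne_zero hn)).1 h
  | prime hq =>
    have : Fact q.Prime := ⟨hq⟩
    have : NeZero ((ordCompl[q] n : ℕ) : R) :=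
      ⟨fun h0 => Nat.not_dvd_ordCompl hq hn ((CharP.cast_eq_zero_iff R q _).1 h0)⟩
    rw [← Nat.ordProj_mul_ordCompl_eq_self n q] at h
    exact isRoot_cyclotomic_prime_pow_mul_iff_of_charP.1 h

theorem exists_aeval_QNDCofactor_ne_zero {R : Type*} [CommRing R] [IsDomain R] (ζ : R) {N : ℕ}
    (hN : 1 < N) :
    ∃ p ∈ N.primeFactors, aeval ζ (QNDCofactor N (N / p)) ≠ 0 := by
  obtain ⟨q, _⟩ := ExpChar.exists R
  by_contra! h
  have hroot : ∀ p ∈ N.primeFactors,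
      ∃ d ∈ (N.divisors \ (N / p).divisors).erase N, (cyclotomic d R).IsRoot ζ := by
    intro p hp
    simpa [QNDCofactor, Finset.prod_eq_zero_iff, aeval_def, eval₂_eq_eval_map] using h p hp
  choose! d hd hroot using hroot
  have hmem : ∀ p ∈ N.primeFactors, d p ≠ N ∧ d p ∣ N ∧ ¬ d p ∣ N / p := by
    intro p hp
    obtain ⟨hdN, ⟨hdN', _⟩, hdp⟩ := by
      simpa only [Finset.mem_erase, Finset.mem_sdiff, Nat.mem_divisors, not_and, not_not] using hd p hp
    have hNp : N / p ≠ 0 :=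
      (Nat.div_pos (Nat.le_of_mem_primeFactors hp) (Nat.pos_of_mem_primeFactors hp)).ne'
    exact ⟨hdN, hdN', fun h => hNp (hdp h)⟩
  obtain ⟨p, hp, hdp⟩ := Nat.exists_eq_of_ordCompl_eq (q := q) (Nat.nonempty_primeFactors.2 hN)
    (fun p hp => (hmem p hp).2.1) (fun p hp => (hmem p hp).2.2) fun p hp =>
      (isPrimitiveRoot_ordCompl_of_isRoot_cyclotomic q
        (ne_zero_of_dvd_ne_zero (by omega) (hmem p hp).2.1) (hroot p hp)).eq_orderOf
  exact (hmem p hp).1 hdp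

universe u in
theorem Ideal.span_eq_top_of_forall_ringHom_exists_ne_zero {A : Type u} [CommRing A] (s : Set A)
    (h : ∀ (K : Type u) [Field K] (φ : A →+* K), ∃ a ∈ s, φ a ≠ 0) : Ideal.span s = ⊤ := by
  by_contra hs
  obtain ⟨m, hm, hsm⟩ := Ideal.exists_le_maximal _ hs
  let := Ideal.Quotient.field m
  obtain ⟨a, ha, hφa⟩ := h (A ⧸ m) (Ideal.Quotient.mk m)
  exact hφa (Ideal.Quotient.eq_zero_iff_mem.2 (hsm (Ideal.subset_span ha)))

/-- For `N > 1`, the ideal of `ℤ[T]` generated by the polynomials `Q_{N, N/p}(T)`, as `p`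
ranges over the prime divisors of `N`, equals the principal ideal `(Φ_N(T))`. -/
theorem span_QND_eq_span_cyclotomic (N : ℕ) (hN : 1 < N) :
    Ideal.span ((fun p => QND N (N / p)) '' {p : ℕ | p.Prime ∧ p ∣ N}) =
      Ideal.span {cyclotomic N ℤ} := by
  have hprimes : {p : ℕ | p.Prime ∧ p ∣ N} = N.primeFactors :=
    Set.ext fun p => (Nat.mem_primeFactors_of_ne_zero (by omega)).symm
  have hfactor : (fun p => QND N (N / p)) '' N.primeFactors =
      ({cyclotomic N ℤ} : Set ℤ[X]) * (fun p => QNDCofactor N (N / p)) '' N.primeFactors := by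
    rw [Set.singleton_mul, Set.image_image]
    exact Set.image_congr fun p hp => QND_eq_cyclotomic_mul_QNDCofactor
      (Nat.div_dvd_of_dvd (Nat.dvd_of_mem_primeFactors hp))
      (Nat.div_lt_self (by omega) (Nat.prime_of_mem_primeFactors hp).one_lt)
  have hcofactors : Ideal.span ((fun p => QNDCofactor N (N / p)) '' N.primeFactors) = ⊤ := by
    refine Ideal.span_eq_top_of_forall_ringHom_exists_ne_zero _ fun K _ φ => ?_
    obtain ⟨p, hp, hζ⟩ := exists_aeval_QNDCofactor_ne_zero (φ X) hN
    have hφ : aeval (φ X) (QNDCofactor N (N / p)) = φ (QNDCofactor N (N / p)) :=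
      DFunLike.congr_fun (algHom_ext (f := aeval (φ X)) (g := φ.toIntAlgHom) (aeval_X _)) _
    exact ⟨_, ⟨p, hp, rfl⟩, hφ ▸ hζ⟩
  rw [hprimes, hfactor, ← Ideal.span_mul_span', hcofactors, Ideal.mul_top]
end

section
/- Let D₁ < D₂ be positive integers with D₁ ∤ D₂. Then the cyclotomic polynomials Φ_{D₁}(T) and Φ_{D₂}(T) generate the unit ideal in ℤ[T]. -/
open Polynomial Finset

/-! Let `d = gcd(D₁, D₂)`, a proper divisor of both `D₁` and `D₂`, and `I = (Φ_{D₁}, Φ_{D₂})`.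
Since `Φ_D ∣ X ^ D - 1`, modulo `I` the variable `X` has order dividing `D₁` and `D₂`, hence `d`.
For a proper divisor `d` of `n`, `Φ_n` divides `(X ^ n - 1) / (X ^ d - 1) = ∑_{i < n/d} X ^ (d i)`,
which is `≡ n / d` modulo `X ^ d - 1`; so `I` contains the coprime integers `D₁ / d` and `D₂ / d`. -/

theorem Ideal.pow_gcd_sub_one_mem {S : Type*} [CommRing S] {I : Ideal S} {x : S} {m n : ℕ}
    (hm : x ^ m - 1 ∈ I) (hn : x ^ n - 1 ∈ I) : x ^ m.gcd n - 1 ∈ I := by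
  simp only [← Ideal.Quotient.eq_zero_iff_mem, map_sub, map_pow, map_one, sub_eq_zero] at hm hn ⊢
  exact pow_gcd_eq_one.mpr ⟨hm, hn⟩

namespace Polynomial

variable {R : Type*} [CommRing R]

theorem cyclotomic_dvd_geom_sum_X_pow {d n : ℕ} (h : d ∈ n.properDivisors) :
    cyclotomic n R ∣ ∑ i ∈ range (n / d), (X ^ d) ^ i := by
  have hd : d ≠ 0 := (Nat.pos_of_mem_properDivisors h).ne'
  have hmul : (X ^ d - 1) * ∑ i ∈ range (n / d), (X ^ d : R[X]) ^ i = X ^ n - 1 := by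
    rw [mul_geom_sum, ← pow_mul, Nat.mul_div_cancel' (Nat.mem_properDivisors.mp h).1]
  rw [← ((monic_X_pow_sub_C 1 hd).isRegular.left.dvd_cancel_left), C_1, hmul]
  exact X_pow_sub_one_mul_cyclotomic_dvd_X_pow_sub_one_of_dvd R h

theorem natCast_div_mem_of_cyclotomic_mem {I : Ideal R[X]} {d n : ℕ}
    (h : d ∈ n.properDivisors) (hΦ : cyclotomic n R ∈ I) (hX : X ^ d - 1 ∈ I) :
    ((n / d : ℕ) : R[X]) ∈ I := by
  have hsum : ∑ i ∈ range (n / d), (X ^ d : R[X]) ^ i ∈ I :=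
    I.mem_of_dvd (cyclotomic_dvd_geom_sum_X_pow h) hΦ
  rw [← Ideal.Quotient.eq_zero_iff_mem, map_sub, map_pow, map_one, sub_eq_zero] at hX
  rw [← Ideal.Quotient.eq_zero_iff_mem] at hsum ⊢
  simpa [map_sum, hX] using hsum

theorem span_cyclotomic_eq_top_of_gcd_lt {m n : ℕ} (hm : m.gcd n < m) (hn : m.gcd n < n) :
    Ideal.span {cyclotomic m R, cyclotomic n R} = ⊤ := by
  set I := Ideal.span {cyclotomic m R, cyclotomic n R}
  set d := m.gcd n
  have hΦm : cyclotomic m R ∈ I := Ideal.subset_span (by simp)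
  have hΦn : cyclotomic n R ∈ I := Ideal.subset_span (by simp)
  have hXd : X ^ d - 1 ∈ I := Ideal.pow_gcd_sub_one_mem
    (I.mem_of_dvd (cyclotomic.dvd_X_pow_sub_one m R) hΦm)
    (I.mem_of_dvd (cyclotomic.dvd_X_pow_sub_one n R) hΦn)
  have hmd := natCast_div_mem_of_cyclotomic_mem
    (Nat.mem_properDivisors.mpr ⟨m.gcd_dvd_left n, hm⟩) hΦm hXd
  have hnd := natCast_div_mem_of_cyclotomic_mem
    (Nat.mem_properDivisors.mpr ⟨m.gcd_dvd_right n, hn⟩) hΦn hXd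
  have hcop : IsCoprime ((m / d : ℕ) : R[X]) ((n / d : ℕ) : R[X]) := by
    simpa only [map_natCast] using
      (Nat.coprime_div_gcd_div_gcd (Nat.gcd_pos_of_pos_left n hm.pos)).isCoprime.map
        (Int.castRingHom R[X])
  obtain ⟨a, b, hab⟩ := hcop
  rw [Ideal.eq_top_iff_one, ← hab]
  exact I.add_mem (I.mul_mem_left a hmd) (I.mul_mem_left b hnd)

end Polynomial

/-- Let `D₁ < D₂` be positive integers with `D₁ ∤ D₂`.  Then `Φ_{D₁}(T)` and `Φ_{D₂}(T)`
generate the unit ideal of `ℤ[T]`. -/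
theorem cyclotomic_span_eq_top (D₁ D₂ : ℕ) (h₁ : 0 < D₁) (hlt : D₁ < D₂)
    (hndvd : ¬ D₁ ∣ D₂) :
    Ideal.span ({cyclotomic D₁ ℤ, cyclotomic D₂ ℤ} : Set (Polynomial ℤ)) = ⊤ := by
  have hgcd : D₁.gcd D₂ < D₁ :=
    (Nat.gcd_le_left D₂ h₁).lt_of_ne fun h ↦ hndvd (h ▸ D₁.gcd_dvd_right D₂)
  exact span_cyclotomic_eq_top_of_gcd_lt hgcd (hgcd.trans hlt)
end

section
/- Let N = qD with q = p^r, gcd(p, D) = 1, D > 1, and let ℓ be a prime divisor of D. In 𝔽_p[T], the reductions F̄_p(T) = (T^N−1)/((T^{N/p}−1)Φ̄_N(T)) and F̄_ℓ(T) = (T^N−1)/((T^{N/ℓ}−1)Φ̄_N(T)) satisfy: F̄_p(T) = (∏_{M∣D, M≠D} Φ̄_M(T))^{φ(q)}, and F̄_p is not divisible by Φ̄_D(T), while for any proper divisor M of D, choosing ℓ a prime divisor of D/M gives gcd(F̄_ℓ(T), Φ̄_M(T)) = 1; consequently gcd over all prime divisors p_i of N of F̄_{p_i}(T) is 1 in 𝔽_p[T].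 -/
open Polynomial
open scoped Nat

/-!
Modulo `p` the Frobenius gives `T^N - 1 = (T^D - 1)^{p^r}` and `Φ_N = Φ_D^{φ(p^r)}`, while
`T^D - 1 = ∏_{M ∣ D} Φ_M` is separable because `p ∤ D`, so its factors are pairwise coprime.
Cancelling, `F̄_p = P^{φ(p^r)}` with `P = (T^D - 1)/Φ_D` coprime to `Φ_D`; and for a prime
`ℓ ∣ D` one gets `F̄_ℓ · Φ_N = G^{p^r}` with `G = (T^D - 1)/(T^{D/ℓ} - 1)` coprime to every `Φ_M`
with `M ∣ D/ℓ`. A common divisor of all `F̄_q` divides `P^{φ(p^r)}`, yet is coprime to each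
factor `Φ_M` of `P` by choosing `ℓ ∣ D/M`.
-/

theorem X_pow_sub_one_pow_char_pow {R : Type*} [CommRing R] (p : ℕ) [Fact p.Prime] [CharP R p]
    (k d : ℕ) : ((X : R[X]) ^ d - 1) ^ p ^ k = X ^ (p ^ k * d) - 1 := by
  rw [sub_pow_char_pow, one_pow, ← pow_mul, mul_comm]

theorem pow_sub_one_dvd_pow_sub_one_of_dvd {R : Type*} [CommRing R] (x : R) {m n : ℕ}
    (h : m ∣ n) : x ^ m - 1 ∣ x ^ n - 1 := by
  obtain ⟨k, rfl⟩ := h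
  exact pow_one_sub_dvd_pow_mul_sub_one x m k

theorem cyclotomic_mul_prod_erase_eq_X_pow_sub_one (R : Type*) [CommRing R] {D : ℕ}
    (hD : 0 < D) : cyclotomic D R * ∏ M ∈ D.divisors.erase D, cyclotomic M R = X ^ D - 1 := by
  rw [Finset.mul_prod_erase _ (fun M => cyclotomic M R) (Nat.mem_divisors_self D hD.ne'),
    prod_cyclotomic_eq_X_pow_sub_one hD]

section Field

variable {K : Type*} [Field K]

theorem isCoprime_of_mul_dvd_X_pow_sub_one {D : ℕ} (hD : (D : K) ≠ 0) {a b : K[X]}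
    (h : a * b ∣ X ^ D - 1) : IsCoprime a b :=
  ((X_pow_sub_one_separable_iff.mpr hD).of_dvd h).isCoprime

theorem not_cyclotomic_dvd_prod_erase_pow {D : ℕ} (hD : (D : K) ≠ 0) (e : ℕ) :
    ¬ cyclotomic D K ∣ (∏ M ∈ D.divisors.erase D, cyclotomic M K) ^ e := by
  have hD0 : 0 < D := Nat.pos_of_ne_zero (by rintro rfl; exact hD Nat.cast_zero)
  have hcop : IsCoprime (cyclotomic D K) (∏ M ∈ D.divisors.erase D, cyclotomic M K) :=
    isCoprime_of_mul_dvd_X_pow_sub_one hD (cyclotomic_mul_prod_erase_eq_X_pow_sub_one K hD0).dvd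
  exact fun h => not_isUnit_of_degree_pos _ (degree_cyclotomic_pos D K hD0)
    (hcop.pow_right.isUnit_of_dvd h)

variable {p : ℕ} [Fact p.Prime] [CharP K p]

theorem eq_prod_cyclotomic_pow_totient_of_mul_eq_X_pow_sub_one {D r : ℕ} (hpD : ¬ p ∣ D)
    (hr : 0 < r) {f : K[X]}
    (hf : f * ((X ^ (p ^ r * D / p) - 1) * cyclotomic (p ^ r * D) K) = X ^ (p ^ r * D) - 1) :
    f = (∏ M ∈ D.divisors.erase D, cyclotomic M K) ^ φ (p ^ r) := by
  have hp : p.Prime := Fact.out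
  have hD0 : 0 < D := Nat.pos_of_ne_zero (by rintro rfl; exact hpD (dvd_zero p))
  have htot : φ (p ^ r) = p ^ r - p ^ (r - 1) := by
    rw [Nat.totient_prime_pow hp hr, Nat.mul_sub_one, ← pow_succ, Nat.sub_add_cancel hr]
  have hexp : p ^ (r - 1) + φ (p ^ r) = p ^ r := by
    rw [htot, Nat.add_sub_cancel' (Nat.pow_le_pow_right hp.pos (Nat.sub_le r 1))]
  have hNp : p ^ r * D / p = p ^ (r - 1) * D :=
    Nat.div_eq_of_eq_mul_left hp.pos (by rw [mul_right_comm, ← pow_succ, Nat.sub_add_cancel hr])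
  have hcyc : cyclotomic (p ^ r * D) K = cyclotomic D K ^ φ (p ^ r) := by
    rw [cyclotomic_mul_prime_pow_eq K hpD hr, htot]
  have hne : ((X : K[X]) ^ D - 1) ^ p ^ (r - 1) * cyclotomic D K ^ φ (p ^ r) ≠ 0 := by
    rw [← cyclotomic_mul_prod_erase_eq_X_pow_sub_one K hD0]
    exact mul_ne_zero (pow_ne_zero _ (mul_ne_zero (cyclotomic_ne_zero D K)
      (Finset.prod_ne_zero_iff.mpr fun M _ => cyclotomic_ne_zero M K)))
      (pow_ne_zero _ (cyclotomic_ne_zero D K))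
  refine mul_right_cancel₀ hne ?_
  calc f * (((X : K[X]) ^ D - 1) ^ p ^ (r - 1) * cyclotomic D K ^ φ (p ^ r))
      = ((X : K[X]) ^ D - 1) ^ p ^ r := by
        rwa [X_pow_sub_one_pow_char_pow p, X_pow_sub_one_pow_char_pow p, ← hNp, ← hcyc]
    _ = ((X : K[X]) ^ D - 1) ^ p ^ (r - 1) *
          (cyclotomic D K * ∏ M ∈ D.divisors.erase D, cyclotomic M K) ^ φ (p ^ r) := by
        rw [cyclotomic_mul_prod_erase_eq_X_pow_sub_one K hD0, ← pow_add, hexp]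
    _ = _ := by ring

theorem isCoprime_cyclotomic_of_mul_eq_X_pow_sub_one {D ℓ M k : ℕ} (hD : (D : K) ≠ 0)
    (hM : M ∣ D) (hℓ : ℓ ∣ D / M) {f c : K[X]}
    (hf : f * ((X ^ (p ^ k * D / ℓ) - 1) * c) = X ^ (p ^ k * D) - 1) :
    IsCoprime f (cyclotomic M K) := by
  have hℓD : ℓ ∣ D := hℓ.trans (Nat.div_dvd_of_dvd hM)
  have hMℓ : M ∣ D / ℓ := Nat.dvd_div_of_mul_dvd (mul_comm M ℓ ▸ Nat.mul_dvd_of_dvd_div hM hℓ)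
  have hDℓ : 0 < D / ℓ := Nat.pos_of_ne_zero fun h => hD <| by
    rw [← Nat.div_mul_cancel hℓD, h, zero_mul, Nat.cast_zero]
  obtain ⟨G, hG⟩ := pow_sub_one_dvd_pow_sub_one_of_dvd (X : K[X]) (Nat.div_dvd_of_dvd hℓD)
  have hfG : f * c = G ^ p ^ k := by
    refine mul_left_cancel₀ (pow_ne_zero (p ^ k) (X_pow_sub_C_ne_zero hDℓ (1 : K))) ?_
    rw [Nat.mul_div_assoc _ hℓD, ← X_pow_sub_one_pow_char_pow p, ← X_pow_sub_one_pow_char_pow p,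
      hG, mul_pow] at hf
    rw [C_1, ← hf]
    ring
  have hcop : IsCoprime (cyclotomic M K) G :=
    (isCoprime_of_mul_dvd_X_pow_sub_one hD hG.symm.dvd).of_isCoprime_of_dvd_left
      ((cyclotomic.dvd_X_pow_sub_one M K).trans (pow_sub_one_dvd_pow_sub_one_of_dvd X hMℓ))
  exact (hcop.pow_right.of_isCoprime_of_dvd_right (Dvd.intro c hfG)).symm

end Field

/-- Let `N = p^r·D` with `p` prime, `r > 0`, `p ∤ D`, `D > 1`.  For each prime `q ∣ N`
let `F̄_q ∈ 𝔽_p[T]` be the polynomial with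
`F̄_q · (T^{N/q} − 1)·Φ̄_N(T) = T^N − 1` (the mod-`p` reduction of
`F_q = (T^N−1)/((T^{N/q}−1)Φ_N(T))`).  Then:
`F̄_p = (∏_{M∣D, M≠D} Φ̄_M)^{φ(p^r)}`; `Φ̄_D ∤ F̄_p`; for every proper divisor `M` of `D`
and every prime `ℓ ∣ D/M` one has `gcd(F̄_ℓ, Φ̄_M) = 1`; and consequently the `F̄_q`, as
`q` ranges over the prime divisors of `N`, have no common non-unit divisor. -/
theorem Fbar_coprime (N D p r : ℕ) (hp : p.Prime) (hr : 0 < r) (hD : 1 < D)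
    (hpD : ¬ p ∣ D) (hN : N = p ^ r * D)
    (F : ℕ → Polynomial (ZMod p))
    (hF : ∀ q ∈ N.primeFactors,
      F q * (((X : Polynomial (ZMod p)) ^ (N / q) - 1) * cyclotomic N (ZMod p)) =
        (X : Polynomial (ZMod p)) ^ N - 1) :
    F p = (∏ M ∈ D.divisors.erase D, cyclotomic M (ZMod p)) ^ Nat.totient (p ^ r) ∧
    ¬ cyclotomic D (ZMod p) ∣ F p ∧
    (∀ M ∈ D.divisors, M ≠ D → ∀ ℓ ∈ (D / M).primeFactors,
      IsCoprime (F ℓ) (cyclotomic M (ZMod p))) ∧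
    (∀ h : Polynomial (ZMod p), (∀ q ∈ N.primeFactors, h ∣ F q) → IsUnit h) := by
  have : Fact p.Prime := ⟨hp⟩
  subst hN
  have hD' : (D : ZMod p) ≠ 0 := by rwa [Ne, ZMod.natCast_eq_zero_iff]
  have mem_primeFactors {q : ℕ} (hq : q.Prime) (hqN : q ∣ p ^ r * D) :
      q ∈ (p ^ r * D).primeFactors :=
    Nat.mem_primeFactors.mpr ⟨hq, hqN, Nat.mul_ne_zero (pow_ne_zero r hp.ne_zero) (by omega)⟩
  have hpN := mem_primeFactors hp (dvd_mul_of_dvd_left (dvd_pow_self p hr.ne') D)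
  have hFp := eq_prod_cyclotomic_pow_totient_of_mul_eq_X_pow_sub_one hpD hr (hF p hpN)
  have hℓN {M ℓ : ℕ} (hM : M ∈ D.divisors) (hℓ : ℓ ∈ (D / M).primeFactors) :
      ℓ ∈ (p ^ r * D).primeFactors :=
    mem_primeFactors (Nat.prime_of_mem_primeFactors hℓ) <| Dvd.dvd.mul_left
      ((Nat.dvd_of_mem_primeFactors hℓ).trans (Nat.div_dvd_of_dvd (Nat.dvd_of_mem_divisors hM))) _
  have hFℓ : ∀ M ∈ D.divisors, M ≠ D → ∀ ℓ ∈ (D / M).primeFactors,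
      IsCoprime (F ℓ) (cyclotomic M (ZMod p)) := fun M hM _ ℓ hℓ =>
    isCoprime_cyclotomic_of_mul_eq_X_pow_sub_one hD' (Nat.dvd_of_mem_divisors hM)
      (Nat.dvd_of_mem_primeFactors hℓ) (hF ℓ (hℓN hM hℓ))
  refine ⟨hFp, hFp ▸ not_cyclotomic_dvd_prod_erase_pow hD' _, hFℓ, fun h hh => ?_⟩
  have hcop : IsCoprime h (∏ M ∈ D.divisors.erase D, cyclotomic M (ZMod p)) := by
    refine IsCoprime.prod_right fun M hM => ?_
    obtain ⟨hMD, hM⟩ := Finset.mem_erase.mp hM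
    obtain ⟨ℓ, hℓ⟩ := Nat.nonempty_primeFactors.mpr (Nat.one_lt_div_of_mem_properDivisors
      (Nat.mem_properDivisors.mpr
        ⟨Nat.dvd_of_mem_divisors hM, lt_of_le_of_ne (Nat.divisor_le hM) hMD⟩))
    exact (hFℓ M hM hMD ℓ hℓ).of_isCoprime_of_dvd_left (hh ℓ (hℓN hM hℓ))
  exact hcop.pow_right.isUnit_of_dvd (hFp ▸ hh p hpN)
end
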